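/- Let μ : L → Ĝ satisfy ∂ μ = 1 (trivial Gauss law syndrome). Then there exists c ∈ ℂ with W^μ ∘ Π_pn = c • Π_pn if and only if μ ℓ = 1 for every link ℓ. Consequently, if χ₁, χ₂ : L → Ĝ are distinct with ∂ χ₁ = ∂ χ₂, then Π_pn ∘ W^{χ₁⁻¹} ∘ W^{χ₂} ∘ Π_pn is not a scalar multiple of Π_pn; that is, two distinct Wilson line errors with the same syndrome are never jointly correctable, so a correctable set of such errors contains at most one representative from each fiber of the Gauss law map. -/

import Mathlib

/-!
The Wilson phase `a ↦ ∏ ℓ, χ ℓ (a ℓ)` changes under the gauge transformation `g` by the factor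
`(∏ v, (∂ χ) v (g v))⁻¹`, so when `∂ μ = 1` the operator `W^μ` commutes with every `U^g` and hence
with `Π_pn`. Since `Π_pn` fixes the constant function `1`, an identity `W^μ ∘ Π_pn = c • Π_pn`
forces the phase of `μ` to be the constant `c = 1`, and testing it on configurations supported on
a single link shows that every `μ ℓ` is trivial. For two errors with the same syndrome,
`W^{χ₁⁻¹} ∘ W^{χ₂} = W^{χ₁⁻¹ χ₂}` with `∂ (χ₁⁻¹ χ₂) = 1`, so `Π_pn ∘ W^{χ₁⁻¹} ∘ W^{χ₂} ∘ Π_pn`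
collapses to `W^{χ₁⁻¹ χ₂} ∘ Π_pn` and the first part applies.
-/


open Finset

variable {V L : Type*} [Fintype V] [Fintype L] [DecidableEq V]
variable {G : Type*} [CommGroup G] [Fintype G]

/-- The gauge transformation `U^g` on the kinematical Hilbert space `(L → G) → ℂ`. -/
def Ugauge (s t : L → V) (g : V → G) : ((L → G) → ℂ) → ((L → G) → ℂ) :=
  fun f a => f fun ℓ => (g (s ℓ))⁻¹ * a ℓ * g (t ℓ)

/-- The Wilson line (multiplication) operator `W^χ` for a family of characters `χ`. -/
def Wline (χ : L → (G →* ℂˣ)) : ((L → G) → ℂ) → ((L → G) → ℂ) :=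
  fun f a => (((∏ ℓ, χ ℓ (a ℓ))⁻¹ : ℂˣ) : ℂ) • f a

/-- The Gauss law map `∂`, assigning to link character data the vertex charge it excites. -/
def gaussMap (s t : L → V) (χ : L → (G →* ℂˣ)) : V → (G →* ℂˣ) :=
  fun v => (∏ ℓ ∈ univ.filter fun ℓ => s ℓ = v, χ ℓ) *
    ∏ ℓ ∈ univ.filter fun ℓ => t ℓ = v, (χ ℓ)⁻¹

/-- The projection `Π_pn` onto the gauge-invariant (perspective-neutral) subspace. -/
noncomputable def piPn (s t : L → V) (G : Type*) [CommGroup G] [Fintype G] :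
    ((L → G) → ℂ) → ((L → G) → ℂ) :=
  ((Fintype.card G : ℂ) ^ Fintype.card V)⁻¹ • ∑ g : V → G, Ugauge s t g

def gaugeAct (s t : L → V) (g : V → G) (a : L → G) : L → G :=
  fun ℓ => (g (s ℓ))⁻¹ * a ℓ * g (t ℓ)

omit [Fintype V] [Fintype L] [DecidableEq V] [Fintype G] in
lemma gaugeAct_gaugeAct (s t : L → V) (g g' : V → G) (a : L → G) :
    gaugeAct s t g' (gaugeAct s t g a) = gaugeAct s t (g * g') a := by
  funext ℓ
  simp only [gaugeAct, Pi.mul_apply, mul_inv]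
  ac_rfl

omit [Fintype V] [Fintype L] [DecidableEq V] [Fintype G] in
lemma Ugauge_apply (s t : L → V) (g : V → G) (f : (L → G) → ℂ) (a : L → G) :
    Ugauge s t g f a = f (gaugeAct s t g a) :=
  rfl

section Projection

omit [Fintype L]

lemma piPn_apply (s t : L → V) (f : (L → G) → ℂ) (a : L → G) :
    piPn s t G f a =
      ((Fintype.card G : ℂ) ^ Fintype.card V)⁻¹ * ∑ g : V → G, f (gaugeAct s t g a) := by
  simp [piPn, Ugauge_apply, Finset.sum_apply]

lemma piPn_eq_self_of_forall_Ugauge_eq (s t : L → V) {f : (L → G) → ℂ}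
    (hf : ∀ g, Ugauge s t g f = f) : piPn s t G f = f := by
  funext a
  have hcard : ((Fintype.card G : ℂ) ^ Fintype.card V) ≠ 0 := by simp
  simp_rw [piPn_apply, ← Ugauge_apply, hf, Finset.sum_const, Finset.card_univ,
    Fintype.card_fun, nsmul_eq_mul, Nat.cast_pow, inv_mul_cancel_left₀ hcard]

lemma Ugauge_piPn (s t : L → V) (g : V → G) (f : (L → G) → ℂ) :
    Ugauge s t g (piPn s t G f) = piPn s t G f := by
  funext a
  simp only [Ugauge_apply, piPn_apply, gaugeAct_gaugeAct]
  congr 1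
  exact Fintype.sum_equiv (Equiv.mulLeft g) _ _ fun _ => rfl

lemma piPn_comp_piPn (s t : L → V) : piPn s t G ∘ piPn s t G = piPn s t G :=
  funext fun f => piPn_eq_self_of_forall_Ugauge_eq s t fun g => Ugauge_piPn s t g f

end Projection

section Characters

omit [Fintype G]

lemma Wline_comp_Wline (χ₁ χ₂ : L → (G →* ℂˣ)) :
    Wline χ₁ ∘ Wline χ₂ = Wline (χ₁ * χ₂) := by
  funext f a
  simp only [Function.comp_apply, Wline, Pi.mul_apply, MonoidHom.mul_apply,
    Finset.prod_mul_distrib, mul_inv, Units.val_mul, smul_eq_mul, mul_assoc]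

lemma eq_one_of_forall_prod_apply_eq_one [DecidableEq L] {χ : L → (G →* ℂˣ)}
    (h : ∀ a : L → G, ∏ ℓ, χ ℓ (a ℓ) = 1) (ℓ : L) : χ ℓ = 1 := by
  refine MonoidHom.ext fun x => ?_
  have hx := h (Pi.mulSingle ℓ x)
  rwa [Fintype.prod_eq_single ℓ fun ℓ' hℓ' => by rw [Pi.mulSingle_eq_of_ne hℓ', map_one],
    Pi.mulSingle_eq_same] at hx

lemma prod_gaussMap_apply (s t : L → V) (χ : L → (G →* ℂˣ)) (g : V → G) :
    ∏ v, gaussMap s t χ v (g v) = (∏ ℓ, χ ℓ (g (s ℓ))) * (∏ ℓ, χ ℓ (g (t ℓ)))⁻¹ := by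
  have fiberwise : ∀ e : L → V,
      ∏ v, ∏ ℓ ∈ univ.filter fun ℓ => e ℓ = v, χ ℓ (g v) = ∏ ℓ, χ ℓ (g (e ℓ)) := by
    intro e
    rw [← Finset.prod_fiberwise univ e fun ℓ => χ ℓ (g (e ℓ))]
    refine Finset.prod_congr rfl fun v _ => Finset.prod_congr rfl fun ℓ hℓ => ?_
    rw [(Finset.mem_filter.mp hℓ).2]
  simp only [gaussMap, MonoidHom.mul_apply, MonoidHom.finsetProd_apply, MonoidHom.inv_apply,
    Finset.prod_mul_distrib, Finset.prod_inv_distrib, fiberwise]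

lemma prod_apply_gaugeAct (s t : L → V) {μ : L → (G →* ℂˣ)} (hμ : gaussMap s t μ = 1)
    (g : V → G) (a : L → G) :
    ∏ ℓ, μ ℓ (gaugeAct s t g a ℓ) = ∏ ℓ, μ ℓ (a ℓ) := by
  have hst : (∏ ℓ, μ ℓ (g (s ℓ))) * (∏ ℓ, μ ℓ (g (t ℓ)))⁻¹ = 1 := by
    simp [← prod_gaussMap_apply, hμ]
  simp only [gaugeAct, map_mul, map_inv, Finset.prod_mul_distrib, Finset.prod_inv_distrib]
  rw [mul_comm, ← mul_assoc, mul_inv_eq_one.mp hst, mul_inv_cancel, one_mul]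

/- In the type `G →* ℂˣ` the codomain is seen as a monoid, and its multiplication agrees with that
of the group `G →* ℂˣ` only after unfolding instances: `rw` and `simp` miss group lemmas about
characters, so these are applied as terms. -/
omit [Fintype V] in
lemma gaussMap_mul (s t : L → V) (χ₁ χ₂ : L → (G →* ℂˣ)) :
    gaussMap s t (χ₁ * χ₂) = gaussMap s t χ₁ * gaussMap s t χ₂ := by
  funext v
  simp only [gaussMap, Pi.mul_apply, Finset.prod_mul_distrib,
    Finset.prod_congr rfl fun ℓ _ => mul_inv (χ₁ ℓ) (χ₂ ℓ)]
  exact mul_mul_mul_comm (G := G →* ℂˣ) _ _ _ _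

end Characters

lemma Wline_comp_piPn_eq_smul_iff (s t : L → V) (μ : L → (G →* ℂˣ)) :
    (∃ c : ℂ, Wline μ ∘ piPn s t G = c • piPn s t G) ↔ ∀ ℓ : L, μ ℓ = 1 := by
  classical
  constructor
  · rintro ⟨c, hc⟩
    have hconst : piPn s t G (fun _ => 1) = fun _ => 1 :=
      piPn_eq_self_of_forall_Ugauge_eq s t fun _ => rfl
    have hphase : ∀ a : L → G, (((∏ ℓ, μ ℓ (a ℓ))⁻¹ : ℂˣ) : ℂ) = c := fun a => by
      simpa [Wline, hconst] using congrFun (congrFun hc fun _ => 1) a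
    have hc1 : c = 1 := by simpa using (hphase 1).symm
    refine eq_one_of_forall_prod_apply_eq_one fun a => inv_eq_one.mp (Units.ext ?_)
    rw [hphase a, hc1, Units.val_one]
  · intro h
    exact ⟨1, by funext f a; simp [Wline, h]⟩

lemma piPn_comp_Wline (s t : L → V) {μ : L → (G →* ℂˣ)} (hμ : gaussMap s t μ = 1) :
    piPn s t G ∘ Wline μ = Wline μ ∘ piPn s t G := by
  funext f a
  simp only [Function.comp_apply, piPn_apply, Wline, smul_eq_mul, prod_apply_gaugeAct s t hμ,
    ← Finset.mul_sum]
  ring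

theorem wilson_scalar_iff_trivial_general (s t : L → V)
    (μ : L → (G →* ℂˣ)) :
    ((∃ c : ℂ, Wline μ ∘ piPn s t G = c • piPn s t G) ↔ ∀ ℓ : L, μ ℓ = 1) ∧
      ∀ χ₁ χ₂ : L → (G →* ℂˣ), χ₁ ≠ χ₂ → gaussMap s t χ₁ = gaussMap s t χ₂ →
        ¬∃ c : ℂ,
          piPn s t G ∘ Wline χ₁⁻¹ ∘ Wline χ₂ ∘ piPn s t G = c • piPn s t G := by
  refine ⟨Wline_comp_piPn_eq_smul_iff s t μ, fun χ₁ χ₂ hne hsyn hscalar => hne ?_⟩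
  have hgauss : gaussMap s t (χ₁⁻¹ * χ₂) = 1 := by
    refine (mul_eq_left (a := gaussMap s t χ₁)).mp ?_
    rw [← gaussMap_mul, mul_inv_cancel_left χ₁ χ₂, hsyn]
  have hreduce : piPn s t G ∘ Wline χ₁⁻¹ ∘ Wline χ₂ ∘ piPn s t G =
      Wline (χ₁⁻¹ * χ₂) ∘ piPn s t G := by
    rw [← Function.comp_assoc (Wline χ₁⁻¹), Wline_comp_Wline, ← Function.comp_assoc,
      piPn_comp_Wline s t hgauss, Function.comp_assoc, piPn_comp_piPn]
  rw [hreduce, Wline_comp_piPn_eq_smul_iff] at hscalar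
  funext ℓ
  exact inv_mul_eq_one.mp (hscalar ℓ)

/-- For `μ` with trivial Gauss law syndrome, `W^μ ∘ Π_pn` is a scalar multiple of `Π_pn`
iff `μ` is trivial on every link. Consequently, two distinct Wilson line errors with the
same syndrome are never jointly correctable: their product restricted to the code space
is not a scalar multiple of `Π_pn`. -/
theorem wilson_scalar_iff_trivial (s t : L → V)
    (μ : L → (G →* ℂˣ)) (hμ : gaussMap s t μ = 1) :
    ((∃ c : ℂ, Wline μ ∘ piPn s t G = c • piPn s t G) ↔ ∀ ℓ : L, μ ℓ = 1) ∧
      ∀ χ₁ χ₂ : L → (G →* ℂˣ), χ₁ ≠ χ₂ → gaussMap s t χ₁ = gaussMap s t χ₂ →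
        ¬∃ c : ℂ,
          piPn s t G ∘ Wline χ₁⁻¹ ∘ Wline χ₂ ∘ piPn s t G = c • piPn s t G :=
  wilson_scalar_iff_trivial_general s t μ
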